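/- arXiv:1110.6737 — 3 statements merged into one kernel-verified Lean document; each statement's English description precedes it below -/
import Mathlib

section
/- Let z1, z3 ∈ ℂ be distinct points, let z2 and z4 be the circumcenters of triangles z1 w z3 (with third vertices w, w' on opposite sides of the line z1z3), and let α and β be the angles at w and w' respectively (the angles opposite the edge z1z3 in the two triangles). Then i(z2−z4)/(z1−z3) = (cot α + cot β)/2. -/
open Complex Real

/-!
The circumcenter of a triangle `z₁ w z₃` lies on the perpendicular bisector of `z₁z₃`, at signed
distance `cot α · |z₃ - z₁| / 2` from the midpoint, where `α` is the angle at `w` (inscribed angle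
theorem). Writing `A = conj (z₁ - w) * (z₃ - w)`, this reads `2 z₂ = z₁ + z₃ + i (z₃ - z₁) cot α`
with `cot α = Re A / Im A` when `w` lies to the left of `z₁ → z₃`. The right triangle is the same
statement with `z₁` and `z₃` exchanged, and subtracting the two formulas gives the theorem.
-/

namespace Complex

open InnerProductGeometry ComplexConjugate

lemma cos_div_sin_angle (x y : ℂ) :
    Real.cos (angle x y) / Real.sin (angle x y) = (conj x * y).re / |(conj x * y).im| := by
  rcases eq_or_ne x 0 with rfl | hx
  · simp
  rcases eq_or_ne y 0 with rfl | hy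
  · simp
  have hN : ‖x‖ * ‖y‖ ≠ 0 := by positivity
  have hgram : inner ℝ x x * inner ℝ y y - inner ℝ x y * inner ℝ x y = (conj x * y).im ^ 2 := by
    simp only [Complex.inner, mul_re, mul_im, conj_re, conj_im]
    ring
  rw [← mul_div_mul_right _ _ hN, cos_angle_mul_norm_mul_norm, sin_angle_mul_norm_mul_norm,
    hgram, Real.sqrt_sq_eq_abs, Complex.inner, mul_comm y]

lemma im_conj_sub_mul_sub_rotate (a b c : ℂ) :
    (conj (a - c) * (b - c)).im = (conj (b - a) * (c - a)).im := by
  simp only [mul_im, sub_re, sub_im, conj_re, conj_im]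
  ring

lemma im_conj_sub_mul_sub_swap (a b c : ℂ) :
    (conj (a - b) * (c - b)).im = -(conj (b - a) * (c - a)).im := by
  simp only [mul_im, sub_re, sub_im, conj_re, conj_im]
  ring

lemma two_mul_circumcenter_sub_mul_im {z₁ z₃ w z : ℂ} (h₁ : ‖z - z₁‖ = ‖z - w‖)
    (h₃ : ‖z - z₁‖ = ‖z - z₃‖) :
    (2 * z - z₁ - z₃) * (conj (z₁ - w) * (z₃ - w)).im
      = I * (z₃ - z₁) * (conj (z₁ - w) * (z₃ - w)).re := by
  have e₁ : normSq (z - z₁) = normSq (z - w) := by rw [← Complex.sq_norm, ← Complex.sq_norm, h₁]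
  have e₃ : normSq (z - z₁) = normSq (z - z₃) := by rw [← Complex.sq_norm, ← Complex.sq_norm, h₃]
  simp only [normSq_apply, sub_re, sub_im] at e₁ e₃
  apply Complex.ext <;>
    simp only [mul_re, mul_im, sub_re, sub_im, ofReal_re, ofReal_im, I_re, I_im, conj_re,
      conj_im, re_ofNat, im_ofNat]
  · linear_combination (z₁.im - z₃.im) * e₁ + (w.im - z₁.im) * e₃
  · linear_combination (z₃.re - z₁.re) * e₁ + (z₁.re - w.re) * e₃

lemma two_mul_circumcenter_eq_of_im_pos {z₁ z₃ w z : ℂ}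
    (hw : 0 < (conj (z₃ - z₁) * (w - z₁)).im)
    (h₁ : ‖z - z₁‖ = ‖z - w‖) (h₃ : ‖z - z₁‖ = ‖z - z₃‖) :
    2 * z = z₁ + z₃ + I * (z₃ - z₁) *
      ((Real.cos (angle (z₁ - w) (z₃ - w)) / Real.sin (angle (z₁ - w) (z₃ - w)) : ℝ) : ℂ) := by
  have hA : 0 < (conj (z₁ - w) * (z₃ - w)).im := by rwa [im_conj_sub_mul_sub_rotate]
  have hAC : ((conj (z₁ - w) * (z₃ - w)).im : ℂ) ≠ 0 := ofReal_ne_zero.2 hA.ne'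
  rw [cos_div_sin_angle, abs_of_pos hA, ofReal_div]
  field_simp
  linear_combination two_mul_circumcenter_sub_mul_im h₁ h₃

end Complex

theorem stmt5 (z1 z3 w w' z2 z4 : ℂ) (h13 : z1 ≠ z3)
    (hw : 0 < ((starRingEnd ℂ) (z3 - z1) * (w - z1)).im)
    (hw' : ((starRingEnd ℂ) (z3 - z1) * (w' - z1)).im < 0)
    (hz2a : ‖z2 - z1‖ = ‖z2 - w‖)
    (hz2b : ‖z2 - z1‖ = ‖z2 - z3‖)
    (hz4a : ‖z4 - z1‖ = ‖z4 - w'‖)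
    (hz4b : ‖z4 - z1‖ = ‖z4 - z3‖)
    (α β : ℝ)
    (hα : α = InnerProductGeometry.angle (z1 - w) (z3 - w))
    (hβ : β = InnerProductGeometry.angle (z1 - w') (z3 - w')) :
    Complex.I * (z2 - z4) / (z1 - z3) =
      (((Real.cos α / Real.sin α + Real.cos β / Real.sin β) / 2 : ℝ) : ℂ) := by
  have h2 := two_mul_circumcenter_eq_of_im_pos hw hz2a hz2b
  have h4 := two_mul_circumcenter_eq_of_im_pos
    (by rw [im_conj_sub_mul_sub_swap]; exact neg_pos.2 hw') (hz4b.symm.trans hz4a) hz4b.symm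
  rw [← hα] at h2
  rw [InnerProductGeometry.angle_comm, ← hβ] at h4
  rw [div_eq_iff (sub_ne_zero.2 h13), ofReal_div, ofReal_add, ofReal_ofNat]
  linear_combination (I / 2) * (h2 - h4) +
    (z3 - z1) * ((Real.cos α / Real.sin α : ℝ) + (Real.cos β / Real.sin β : ℝ)) / 2 * I_mul_I
end

section
/- Define a function f on the nine vertices V = {0, i, −i, t, −t, s(t+i), −s(t+i), s(t−i), −s(t−i)} where t = cot(π/8) and s = √2·M for a parameter M > 1, by f(0) = M(1+i), f(±i) = 1, f(±t) = 0, f(±s(t+i)) = 0, f(±s(t−i)) = 2Mi. Then f satisfies the discrete analyticity equation (f(z1)−f(z3))/(z1−z3) = (f(z2)−f(z4))/(z2−z4) on the quadrilateral face with vertices z1 = 0, z2 = i, z3 = s(t+i), z4 = t (listed so that z1z3 and z2z4 are the diagonals). -/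
open Complex Real

theorem stmt14 (M : ℝ) (hM : 1 < M) (f : ℂ → ℂ)
    (t : ℝ) (ht : t = Real.cos (Real.pi / 8) / Real.sin (Real.pi / 8))
    (s : ℝ) (hs : s = Real.sqrt 2 * M)
    (hf0 : f 0 = M * (1 + I))
    (hfi : f I = 1) (hfi' : f (-I) = 1)
    (hft : f t = 0) (hft' : f (-t : ℝ) = 0)
    (hfp : f (s * (t + I)) = 0) (hfp' : f (-(s * (t + I))) = 0)
    (hfm : f (s * (t - I)) = 2 * M * I) (hfm' : f (-(s * (t - I))) = 2 * M * I) :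
    (f 0 - f (s * (t + I))) / ((0 : ℂ) - s * (t + I)) =
      (f I - f t) / (I - t) := by
  set a := Real.sqrt 2 with ha
  have ha2 : a ^ 2 = 2 := Real.sq_sqrt (by norm_num)
  have ha0 : 0 ≤ a := Real.sqrt_nonneg 2
  have ha1 : 1 ≤ a := by nlinarith
  have halt : a < 2 := by nlinarith
  have hkey : Real.sqrt (2 + a) = (1 + a) * Real.sqrt (2 - a) := by
    rw [show (2 + a) = ((1 + a) * Real.sqrt (2 - a)) ^ 2 by
      rw [mul_pow, Real.sq_sqrt (by linarith)]; nlinarith]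
    exact Real.sqrt_sq (by positivity)
  have hsspos : 0 < Real.sqrt (2 - a) := Real.sqrt_pos.mpr (by linarith)
  have ht' : t = 1 + a := by
    rw [ht, Real.cos_pi_div_eight, Real.sin_pi_div_eight, ← ha, hkey]
    field_simp
  have hM0 : (0:ℝ) < M := by linarith
  have hs0 : s ≠ 0 := by rw [hs]; positivity
  have htI : (I : ℂ) - (t : ℂ) ≠ 0 := by
    intro h
    have := congrArg Complex.im h
    simp at this
  have htI' : (t : ℂ) + I ≠ 0 := by
    intro h
    have := congrArg Complex.im h
    simp at this
  have hden : (0 : ℂ) - (s : ℂ) * ((t : ℂ) + I) ≠ 0 := by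
    simp only [zero_sub, neg_ne_zero]
    exact mul_ne_zero (by exact_mod_cast hs0) htI'
  rw [hf0, hfp, hfi, hft]
  rw [div_eq_div_iff hden htI]
  have hac : (a : ℂ) ^ 2 = 2 := by
    exact_mod_cast ha2
  rw [ht', hs]
  push_cast
  linear_combination (M:ℂ) * Complex.I_sq + (M:ℂ) * hac
end

section
/- Let z1 z2 z3 z4 be a quadrilateral whose diagonals have ratio at most e and meet at an angle at least 1/e (e ≥ 1), let z' be the intersection of the perpendicular bisectors of the two diagonals, and let h be an upper bound for twice the maximal side length of the quadrilateral (so each side has length ≤ h/2). Then |z' − (z2+z4)/2| ≤ C·e·h for an absolute constant C. -/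
open Complex

/-- Real inner product of two complex numbers viewed as vectors in ℝ². -/
def rdot (v w : ℂ) : ℝ := (v * (starRingEnd ℂ) w).re

/-!
Let `θ` be the angle between the diagonals and `v = z' - (z2 + z4) / 2`. Since `v` is orthogonal
to the second diagonal, in the plane its projection onto the first diagonal has length
`‖v‖ sin θ`. By the bisector condition on the first diagonal, this projection is also the
projection of the difference of the two midpoints, which has length at most `h / 2`. Finally
`sin θ ≥ 2 / (π e)` by Jordan's inequality, so `‖v‖ ≤ π e h / 4 ≤ e h`.
-/

open InnerProductGeometry Real
open scoped InnerProductSpace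

lemma rdot_eq_inner (v w : ℂ) : rdot v w = ⟪v, w⟫_ℝ := by
  rw [rdot, real_inner_comm, Complex.inner]

namespace Real

theorem mul_le_sin_of_le_of_le_pi_sub {a x : ℝ} (ha : 0 ≤ a) (hax : a ≤ x)
    (hxa : x ≤ π - a) : 2 / π * a ≤ sin x := by
  rcases le_total x (π / 2) with hx | hx
  · exact (mul_le_mul_of_nonneg_left hax (by positivity)).trans (mul_le_sin (ha.trans hax) hx)
  · rw [← sin_pi_sub]
    exact (mul_le_mul_of_nonneg_left (by linarith) (by positivity)).trans
      (mul_le_sin (by linarith) (by linarith))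

end Real

namespace Complex

/-- In the plane, `v ⟂ w` forces `v` to be a real multiple of `w` turned by a right angle. -/
theorem inner_sq_mul_norm_sq_of_inner_eq_zero {u v w : ℂ} (h : ⟪v, w⟫_ℝ = 0) :
    ⟪v, u⟫_ℝ ^ 2 * ‖w‖ ^ 2 = ‖v‖ ^ 2 * (‖u‖ ^ 2 * ‖w‖ ^ 2 - ⟪u, w⟫_ℝ ^ 2) := by
  simp only [Complex.inner, Complex.sq_norm, normSq_apply, mul_re, conj_re, conj_im] at h ⊢
  linear_combination ((u.re ^ 2 - u.im ^ 2) * (v.re * w.re - v.im * w.im)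
    + 2 * u.re * u.im * (v.im * w.re + v.re * w.im)) * h

theorem abs_inner_of_inner_eq_zero {u v w : ℂ} (hw : w ≠ 0) (h : ⟪v, w⟫_ℝ = 0) :
    |⟪v, u⟫_ℝ| = ‖v‖ * ‖u‖ * Real.sin (angle u w) := by
  have hsin : (Real.sin (angle u w) * (‖u‖ * ‖w‖)) ^ 2 = ‖u‖ ^ 2 * ‖w‖ ^ 2 - ⟪u, w⟫_ℝ ^ 2 := by
    rw [sin_angle_mul_norm_mul_norm, Real.sq_sqrt (by linarith [real_inner_mul_inner_self_le u w]),
      real_inner_self_eq_norm_sq, real_inner_self_eq_norm_sq]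
    ring
  have hw' : 0 < ‖w‖ := norm_pos_iff.mpr hw
  have hsq : ⟪v, u⟫_ℝ ^ 2 = (‖v‖ * ‖u‖ * Real.sin (angle u w)) ^ 2 := by
    have := inner_sq_mul_norm_sq_of_inner_eq_zero (u := u) h
    rw [← hsin] at this
    exact mul_right_cancel₀ (pow_ne_zero 2 hw'.ne') (by linear_combination this)
  rw [← Real.sqrt_sq_eq_abs, hsq, Real.sqrt_sq]
  have := Real.sin_nonneg_of_nonneg_of_le_pi (angle_nonneg u w) (angle_le_pi u w)
  positivity

/-- The law of sines in the triangle `z p q`, whose angle at `z` is that between `d₁` and `d₂`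
up to a supplement. -/
theorem norm_sub_mul_sin_angle_le {p q z d₁ d₂ : ℂ} (hd₁ : d₁ ≠ 0) (hd₂ : d₂ ≠ 0)
    (h₁ : ⟪z - p, d₁⟫_ℝ = 0) (h₂ : ⟪z - q, d₂⟫_ℝ = 0) :
    ‖z - q‖ * Real.sin (angle d₁ d₂) ≤ ‖p - q‖ := by
  have hshift : ⟪z - q, d₁⟫_ℝ = ⟪p - q, d₁⟫_ℝ := by
    rw [show z - q = (z - p) + (p - q) by ring, inner_add_left, h₁, zero_add]
  refine le_of_mul_le_mul_right ?_ (norm_pos_iff.mpr hd₁)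
  calc ‖z - q‖ * Real.sin (angle d₁ d₂) * ‖d₁‖ = |⟪z - q, d₁⟫_ℝ| := by
        rw [abs_inner_of_inner_eq_zero hd₂ h₂]; ring
    _ = |⟪p - q, d₁⟫_ℝ| := by rw [hshift]
    _ ≤ ‖p - q‖ * ‖d₁‖ := abs_real_inner_le_norm _ _

theorem norm_midpoint_sub_midpoint_le (z₁ z₂ z₃ z₄ : ℂ) :
    ‖(z₁ + z₃) / 2 - (z₂ + z₄) / 2‖ ≤ (‖z₂ - z₁‖ + ‖z₄ - z₃‖) / 2 := by
  rw [show (z₁ + z₃) / 2 - (z₂ + z₄) / 2 = -((z₂ - z₁) + (z₄ - z₃)) / 2 by ring, norm_div,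
    norm_neg, Complex.norm_ofNat]
  gcongr
  exact norm_add_le _ _

end Complex

theorem stmt18 :
    ∃ C : ℝ, 0 < C ∧
      ∀ (e h : ℝ) (z1 z2 z3 z4 z' : ℂ), 1 ≤ e →
        z1 ≠ z3 → z2 ≠ z4 →
        ‖z3 - z1‖ / ‖z4 - z2‖ ≤ e →
        ‖z4 - z2‖ / ‖z3 - z1‖ ≤ e →
        1 / e ≤ InnerProductGeometry.angle (z3 - z1) (z4 - z2) →
        InnerProductGeometry.angle (z3 - z1) (z4 - z2) ≤ Real.pi - 1 / e →
        rdot (z' - (z1 + z3) / 2) (z3 - z1) = 0 →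
        rdot (z' - (z2 + z4) / 2) (z4 - z2) = 0 →
        ‖z2 - z1‖ ≤ h / 2 →
        ‖z3 - z2‖ ≤ h / 2 →
        ‖z4 - z3‖ ≤ h / 2 →
        ‖z1 - z4‖ ≤ h / 2 →
        ‖z' - (z2 + z4) / 2‖ ≤ C * e * h := by
  refine ⟨1, one_pos, ?_⟩
  intro e h z1 z2 z3 z4 z' he h13 h24 _ _ hangle_ge hangle_le hperp₁ hperp₂ h12 _ h34 _
  rw [rdot_eq_inner] at hperp₁ hperp₂
  have he₀ : 0 < e := one_pos.trans_le he
  have hh : 0 ≤ h := by linarith [norm_nonneg (z2 - z1)]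
  have hsin : 2 / π * (1 / e) ≤ Real.sin (angle (z3 - z1) (z4 - z2)) :=
    mul_le_sin_of_le_of_le_pi_sub (by positivity) hangle_ge hangle_le
  have hlaw : ‖z' - (z2 + z4) / 2‖ * Real.sin (angle (z3 - z1) (z4 - z2)) ≤ h / 2 :=
    (Complex.norm_sub_mul_sin_angle_le (sub_ne_zero.mpr h13.symm) (sub_ne_zero.mpr h24.symm)
      hperp₁ hperp₂).trans
      ((Complex.norm_midpoint_sub_midpoint_le z1 z2 z3 z4).trans (by linarith))
  have hmul : ‖z' - (z2 + z4) / 2‖ * (2 / π * (1 / e)) ≤ h / 2 :=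
    (mul_le_mul_of_nonneg_left hsin (norm_nonneg _)).trans hlaw
  rw [show 2 / π * (1 / e) = 2 / (π * e) by field_simp, mul_div_assoc',
    div_le_iff₀ (by positivity)] at hmul
  nlinarith [mul_nonneg (mul_nonneg hh he₀.le) (sub_nonneg.mpr pi_le_four)]
end
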